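/- arXiv:math/9908007 — 11 statements merged into one kernel-verified Lean document; each statement's English description precedes it below -/
import Mathlib

section
/- For α ∈ E_f, the assignment f_α : M → ℝ/ℤ sending a point x = lim f(t_i) of M to lim π(α t_i) is well-defined: if lim f(t_i) = lim f(t_i') = x, then lim π(α t_i) = lim π(α t_i'). -/
open Filter Topology

private lemma tendsto_of_interleave {Y : Type*} [TopologicalSpace Y] {u : ℕ → Y} {a : Y}
    (h1 : Tendsto (fun n => u (2 * n)) atTop (nhds a))
    (h2 : Tendsto (fun n => u (2 * n + 1)) atTop (nhds a)) :
    Tendsto u atTop (nhds a) := by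
  rw [tendsto_def] at *
  intro s hs
  rw [mem_atTop_sets]
  obtain ⟨N1, hN1⟩ := eventually_atTop.mp (h1 s hs)
  obtain ⟨N2, hN2⟩ := eventually_atTop.mp (h2 s hs)
  refine ⟨2 * (max N1 N2) + 1, fun m hm => ?_⟩
  rcases Nat.even_or_odd m with ⟨k, hk⟩ | ⟨k, hk⟩
  · have : N1 ≤ k := by omega
    have := hN1 k this
    simpa [hk, two_mul] using this
  · have : N2 ≤ k := by omega
    have := hN2 k this
    simpa [hk, two_mul] using this

noncomputable def expGroup {X : Type*} [MetricSpace X] (f : ℝ → X) : Set ℝ :=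
  {α : ℝ | ∀ t : ℕ → ℝ, (∃ x : X, Tendsto (fun i => f (t i)) atTop (nhds x)) →
      ∃ ξ : UnitAddCircle, Tendsto (fun i => ((α * t i : ℝ) : UnitAddCircle)) atTop (nhds ξ)}

theorem f_alpha_well_defined {X : Type*} [MetricSpace X] (f : ℝ → X) (hf : Continuous f)
    (α : ℝ) (hα : α ∈ expGroup f) (t t' : ℕ → ℝ) (x : X)
    (h1 : Tendsto (fun i => f (t i)) atTop (nhds x))
    (h2 : Tendsto (fun i => f (t' i)) atTop (nhds x))
    (ξ ξ' : UnitAddCircle)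
    (h3 : Tendsto (fun i => ((α * t i : ℝ) : UnitAddCircle)) atTop (nhds ξ))
    (h4 : Tendsto (fun i => ((α * t' i : ℝ) : UnitAddCircle)) atTop (nhds ξ')) :
    ξ = ξ' := by
  set s : ℕ → ℝ := fun n => if Even n then t (n / 2) else t' (n / 2) with hs
  have he : ∀ n, s (2 * n) = t n := fun n => by simp [hs, Nat.mul_div_cancel_left n two_pos]
  have ho : ∀ n, s (2 * n + 1) = t' n := by
    intro n
    have : ¬ Even (2 * n + 1) := by simp [Nat.even_add_one, parity_simps]
    simp [hs, this, Nat.mul_add_div two_pos]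
  have hconv : Tendsto (fun n => f (s n)) atTop (nhds x) := by
    apply tendsto_of_interleave
    · simpa [he] using h1
    · simpa [ho] using h2
  obtain ⟨ζ, hζ⟩ := hα s ⟨x, hconv⟩
  have hsue : Tendsto (fun n => ((α * t n : ℝ) : UnitAddCircle)) atTop (nhds ζ) := by
    have := hζ.comp (tendsto_atTop_mono (fun n => show id n ≤ 2 * n by simp [id]; omega) tendsto_id)
    simpa [Function.comp_def, he] using this
  have hsuo : Tendsto (fun n => ((α * t' n : ℝ) : UnitAddCircle)) atTop (nhds ζ) := by
    have h2n : Tendsto (fun n => 2 * n + 1) atTop atTop :=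
      tendsto_atTop_mono (fun n => show id n ≤ 2 * n + 1 by simp [id]; omega) tendsto_id
    have := hζ.comp h2n
    simpa [Function.comp_def, ho] using this
  have e1 : ξ = ζ := tendsto_nhds_unique h3 hsue
  have e2 : ξ' = ζ := tendsto_nhds_unique h4 hsuo
  rw [e1, e2]
end

section
/- For each α ∈ E_f, the induced map f_α : M → ℝ/ℤ, defined by f_α(lim f(t_i)) = lim π(α t_i), is continuous on M. -/
open Filter Topology

theorem f_alpha_continuous {X : Type*} [MetricSpace X] (f : ℝ → X) (hf : Continuous f)
    (α : ℝ) (hα : α ∈ expGroup f)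
    (fα : closure (Set.range f) → UnitAddCircle)
    (hdef : ∀ (t : ℕ → ℝ) (x : closure (Set.range f)),
      Tendsto (fun i => f (t i)) atTop (nhds (x : X)) →
      Tendsto (fun i => ((α * t i : ℝ) : UnitAddCircle)) atTop (nhds (fα x))) :
    Continuous fα := by
  apply SeqContinuous.continuous
  intro u x hu
  -- For each n, pick a real s n with f (s n) close to u n and π(α s n) close to fα (u n)
  have hseq : ∀ n : ℕ, ∃ s : ℝ, dist (f s) ((u n : X)) < 1 / (n + 1) ∧
      dist (((α * s : ℝ) : UnitAddCircle)) (fα (u n)) < 1 / (n + 1) := by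
    intro n
    obtain ⟨t, ht⟩ : ∃ t : ℕ → ℝ, Tendsto (fun i => f (t i)) atTop (nhds ((u n : X))) := by
      have hmem := (u n).2
      rw [mem_closure_iff_seq_limit] at hmem
      obtain ⟨y, hy, hyt⟩ := hmem
      choose t ht using hy
      exact ⟨t, by simpa only [ht] using hyt⟩
    have h2 := hdef t (u n) ht
    have hpos : (0 : ℝ) < 1 / (n + 1) := by positivity
    obtain ⟨N1, hN1⟩ := Metric.tendsto_atTop.1 ht _ hpos
    obtain ⟨N2, hN2⟩ := Metric.tendsto_atTop.1 h2 _ hpos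
    exact ⟨t (max N1 N2), hN1 _ (le_max_left _ _), hN2 _ (le_max_right _ _)⟩
  choose s hs1 hs2 using hseq
  have hlim : Tendsto (fun n : ℕ => 1 / ((n : ℝ) + 1)) atTop (nhds 0) :=
    tendsto_one_div_add_atTop_nhds_zero_nat
  have hd1 : Tendsto (fun n => dist (f (s n)) ((u n : X))) atTop (nhds 0) :=
    squeeze_zero (fun n => dist_nonneg) (fun n => (hs1 n).le) hlim
  have hd2 : Tendsto (fun n => dist (((α * s n : ℝ) : UnitAddCircle)) (fα (u n))) atTop
      (nhds 0) :=
    squeeze_zero (fun n => dist_nonneg) (fun n => (hs2 n).le) hlim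
  have hux : Tendsto (fun n => ((u n : X))) atTop (nhds (x : X)) :=
    (continuous_subtype_val.tendsto x).comp hu
  have hfs : Tendsto (fun n => f (s n)) atTop (nhds (x : X)) := by
    rw [Metric.tendsto_atTop] at hux ⊢
    intro ε hε
    obtain ⟨N1, hN1⟩ := hux (ε / 2) (by linarith)
    obtain ⟨N2, hN2⟩ := Metric.tendsto_atTop.1 hd1 (ε / 2) (by linarith)
    refine ⟨max N1 N2, fun n hn => ?_⟩
    have h1 := hN1 n (le_of_max_le_left hn)
    have h2 := hN2 n (le_of_max_le_right hn)
    rw [Real.dist_eq, abs_sub_lt_iff] at h2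
    calc dist (f (s n)) (x : X) ≤ dist (f (s n)) ((u n : X)) + dist ((u n : X)) (x : X) :=
          dist_triangle _ _ _
      _ < ε := by linarith [h2.1, dist_nonneg (x := f (s n)) (y := (u n : X))]
  have hπ : Tendsto (fun n => ((α * s n : ℝ) : UnitAddCircle)) atTop (nhds (fα x)) :=
    hdef s x hfs
  -- conclude fα (u n) → fα x
  rw [Metric.tendsto_atTop]
  intro ε hε
  obtain ⟨N1, hN1⟩ := Metric.tendsto_atTop.1 hπ (ε / 2) (by linarith)
  obtain ⟨N2, hN2⟩ := Metric.tendsto_atTop.1 hd2 (ε / 2) (by linarith)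
  refine ⟨max N1 N2, fun n hn => ?_⟩
  have h1 := hN1 n (le_of_max_le_left hn)
  have h2 := hN2 n (le_of_max_le_right hn)
  rw [Real.dist_eq, abs_sub_lt_iff] at h2
  calc dist (fα (u n)) (fα x)
      ≤ dist (fα (u n)) (((α * s n : ℝ) : UnitAddCircle)) +
        dist (((α * s n : ℝ) : UnitAddCircle)) (fα x) := dist_triangle _ _ _
    _ < ε := by
        rw [dist_comm (fα (u n))]
        linarith [h2.1, dist_nonneg (x := ((α * s n : ℝ) : UnitAddCircle)) (y := fα (u n))]
end

section
/- If f : ℝ → X is stable (there is an unbounded f-sequence) and α ∈ E_f with α ≠ 0, then the continuous map f_α : M → ℝ/ℤ is not null-homotopic; equivalently, f_α admits no continuous lift g : M → ℝ with π ∘ g = f_α. -/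
open Filter Topology

/-- A continuous integer-valued function on ℝ is constant. -/
lemma int_valued_const (k : ℝ → ℝ) (hk : Continuous k) (hint : ∀ t, ∃ n : ℤ, k t = n) :
    ∀ t, k t = k 0 := by
  intro t
  by_contra hne
  obtain ⟨n, hn⟩ := hint t
  obtain ⟨m, hm⟩ := hint 0
  -- WLOG handle both orders
  have key : ∀ a b : ℝ, k a < k b → (∃ p : ℤ, k a = p) → (∃ q : ℤ, k b = q) → False := by
    intro a b hab ⟨p, hp⟩ ⟨q, hq⟩
    have hpq : (p : ℝ) < q := by rw [← hp, ← hq]; exact hab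
    have h1 : (p : ℝ) + 1 ≤ q := by exact_mod_cast Int.cast_lt.mp hpq
    have hmem : k a + 1/2 ∈ Set.Icc (k a) (k b) := by
      constructor <;> [linarith; ·rw [hp, hq]; linarith]
    have hiv : Set.Icc (k a) (k b) ⊆ k '' Set.univ := by
      have := intermediate_value_univ (a := a) (b := b) (f := k) hk
      simpa [Set.image_univ, Set.range] using this
    obtain ⟨s, -, hs⟩ := hiv hmem
    obtain ⟨r, hr⟩ := hint s
    rw [hs] at hr
    rw [hp] at hr
    have : (2 * r : ℝ) = 2 * p + 1 := by push_cast at hr ⊢; linarith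
    have : (2 * r : ℤ) = 2 * p + 1 := by exact_mod_cast this
    omega
  rcases lt_or_gt_of_ne hne with h | h
  · exact key t 0 h ⟨n, hn⟩ ⟨m, hm⟩
  · exact key 0 t h ⟨m, hm⟩ ⟨n, hn⟩

theorem f_alpha_no_lift {X : Type*} [MetricSpace X] (f : ℝ → X) (hf : Continuous f)
    (hstable : ∃ t : ℕ → ℝ, (∀ C : ℝ, ∃ i, C < |t i|) ∧
      ∃ x : X, Tendsto (fun i => f (t i)) atTop (nhds x))
    (α : ℝ) (hα : α ∈ expGroup f) (hα0 : α ≠ 0)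
    (fα : closure (Set.range f) → UnitAddCircle) (hcont : Continuous fα)
    (hdef : ∀ (t : ℕ → ℝ) (x : closure (Set.range f)),
      Tendsto (fun i => f (t i)) atTop (nhds (x : X)) →
      Tendsto (fun i => ((α * t i : ℝ) : UnitAddCircle)) atTop (nhds (fα x))) :
    ¬ ∃ g : closure (Set.range f) → ℝ, Continuous g ∧
        ∀ x, ((g x : ℝ) : UnitAddCircle) = fα x := by
  rintro ⟨g, hg, hgl⟩
  -- the point of M over f t
  set ι : ℝ → closure (Set.range f) :=
    fun t => ⟨f t, subset_closure ⟨t, rfl⟩⟩ with hι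
  have hιc : Continuous ι := hf.subtype_mk _
  -- fα (ι t) = π (α t)
  have hfι : ∀ t : ℝ, fα (ι t) = ((α * t : ℝ) : UnitAddCircle) := by
    intro t
    have h1 : Tendsto (fun _ : ℕ => f t) atTop (nhds ((ι t : X))) := tendsto_const_nhds
    have h2 := hdef (fun _ => t) (ι t) h1
    have h3 : Tendsto (fun _ : ℕ => ((α * t : ℝ) : UnitAddCircle)) atTop
        (nhds ((α * t : ℝ) : UnitAddCircle)) := tendsto_const_nhds
    exact (tendsto_nhds_unique h3 h2).symm
  -- h t := g (ι t) satisfies π (h t) = π (α t)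
  set h : ℝ → ℝ := fun t => g (ι t) with hh
  have hhc : Continuous h := hg.comp hιc
  have hint : ∀ t, ∃ n : ℤ, h t - α * t = n := by
    intro t
    have : ((h t : ℝ) : UnitAddCircle) = ((α * t : ℝ) : UnitAddCircle) := by
      rw [hh]; simp only []; rw [hgl (ι t), hfι t]
    have hsub : (h t - α * t : ℝ) ∈ AddSubgroup.zmultiples (1 : ℝ) :=
      QuotientAddGroup.eq_iff_sub_mem.mp this
    obtain ⟨n, hn⟩ := hsub
    exact ⟨n, by simpa using hn.symm⟩
  -- so h t - α t is constant
  have hconst : ∀ t, h t - α * t = h 0 - α * 0 :=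
    int_valued_const (fun t => h t - α * t)
      (hhc.sub (continuous_const.mul continuous_id)) hint
  set c : ℝ := h 0 - α * 0 with hc
  -- use the unbounded f-sequence
  obtain ⟨t, hunb, x, hx⟩ := hstable
  have hxM : x ∈ closure (Set.range f) :=
    mem_closure_of_tendsto hx (Eventually.of_forall fun i => ⟨t i, rfl⟩)
  have hιt : Tendsto (fun i => ι (t i)) atTop (nhds ⟨x, hxM⟩) := by
    rw [Topology.IsEmbedding.subtypeVal.tendsto_nhds_iff]
    exact hx
  have hgt : Tendsto (fun i => h (t i)) atTop (nhds (g ⟨x, hxM⟩)) :=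
    (hg.tendsto _).comp hιt
  have hαt : Tendsto (fun i => α * t i) atTop (nhds (g ⟨x, hxM⟩ - c)) := by
    have : (fun i => α * t i) = fun i => h (t i) - c := by
      funext i; have := hconst (t i); linarith
    rw [this]
    exact hgt.sub tendsto_const_nhds
  have htt : Tendsto t atTop (nhds ((g ⟨x, hxM⟩ - c) / α)) := by
    have := hαt.div_const α
    simpa [mul_div_assoc, mul_comm, hα0, mul_div_cancel_left₀] using this
  have hbdd : ∃ C, ∀ i, |t i| ≤ C := by
    have habs : Tendsto (fun i => |t i|) atTop (nhds |(g ⟨x, hxM⟩ - c) / α|) :=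
      htt.abs
    obtain ⟨C, hC⟩ := habs.bddAbove_range
    exact ⟨C, fun i => hC ⟨i, rfl⟩⟩
  obtain ⟨C, hC⟩ := hbdd
  obtain ⟨i, hi⟩ := hunb C
  exact absurd (hC i) (not_le.mpr hi)
end

section
/- Let φ be a flow on X, and let f and g be the orbit maps of points x and y respectively (f(t) = φ(t,x), g(t) = φ(t,y)). If y lies in the closure of f(ℝ), then E_f ⊆ E_g. -/
open Filter Topology

theorem exponents_orbit_closure_subset {X : Type*} [MetricSpace X]
    (φ : ℝ → X → X) (hφ : Continuous fun p : ℝ × X => φ p.1 p.2)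
    (h0 : ∀ x : X, φ 0 x = x) (hadd : ∀ s t : ℝ, ∀ x : X, φ (s + t) x = φ s (φ t x))
    (x y : X) (hy : y ∈ closure (Set.range fun t : ℝ => φ t x)) :
    expGroup (fun t : ℝ => φ t x) ⊆ expGroup (fun t : ℝ => φ t y) := by
  intro α hα t ⟨z, hz⟩
  -- get a sequence s with φ (s j) x → y
  rw [mem_closure_iff_seq_limit] at hy
  obtain ⟨w, hw_mem, hw_lim⟩ := hy
  choose s hs using hw_mem
  have hsy : Tendsto (fun j => φ (s j) x) atTop (nhds y) := by
    have : (fun j => φ (s j) x) = w := funext hs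
    rw [this]; exact hw_lim
  -- π (α * s j) converges
  obtain ⟨ξ, hξ⟩ := hα s ⟨y, hsy⟩
  -- choose k i ≥ i with φ (t i + s (k i)) x close to φ (t i) y
  have hchoice : ∀ i : ℕ, ∃ j : ℕ, i ≤ j ∧
      dist (φ (t i + s j) x) (φ (t i) y) < 1 / (i + 1) := by
    intro i
    have hc : Continuous fun w : X => φ (t i) w :=
      hφ.comp (continuous_const.prodMk continuous_id)
    have h1 : Tendsto (fun j => φ (t i) (φ (s j) x)) atTop (nhds (φ (t i) y)) :=
      (hc.tendsto y).comp hsy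
    have h2 : ∀ᶠ j in atTop, dist (φ (t i) (φ (s j) x)) (φ (t i) y) < 1 / (i + 1) := by
      have := (tendsto_iff_dist_tendsto_zero.mp h1)
      have hpos : (0 : ℝ) < 1 / (i + 1) := by positivity
      exact (this.eventually (eventually_lt_nhds hpos)).mono (fun j hj => by
        simpa using hj)
    obtain ⟨j, hj1, hj2⟩ := ((eventually_ge_atTop i).and h2).exists
    exact ⟨j, hj1, by rwa [hadd]⟩
  choose k hk1 hk2 using hchoice
  set u : ℕ → ℝ := fun i => t i + s (k i) with hu
  -- φ (u i) x → z
  have hux : Tendsto (fun i => φ (u i) x) atTop (nhds z) := by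
    rw [tendsto_iff_dist_tendsto_zero]
    have hbound : ∀ i, dist (φ (u i) x) z ≤ 1 / (i + 1) + dist (φ (t i) y) z := by
      intro i
      calc dist (φ (u i) x) z ≤ dist (φ (u i) x) (φ (t i) y) + dist (φ (t i) y) z :=
            dist_triangle _ _ _
        _ ≤ 1 / (i + 1) + dist (φ (t i) y) z := by
            exact add_le_add (le_of_lt (hk2 i)) le_rfl
    have hlim : Tendsto (fun i : ℕ => 1 / ((i : ℝ) + 1) + dist (φ (t i) y) z) atTop
        (nhds 0) := by
      have h1 : Tendsto (fun i : ℕ => 1 / ((i : ℝ) + 1)) atTop (nhds 0) :=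
        tendsto_one_div_add_atTop_nhds_zero_nat
      have h2 : Tendsto (fun i => dist (φ (t i) y) z) atTop (nhds 0) :=
        tendsto_iff_dist_tendsto_zero.mp hz
      simpa using h1.add h2
    exact squeeze_zero (fun i => dist_nonneg) hbound hlim
  obtain ⟨η, hη⟩ := hα u ⟨z, hux⟩
  -- π (α * s (k i)) → ξ since k i → ∞
  have hk_top : Tendsto k atTop atTop :=
    tendsto_atTop_atTop.mpr (fun b => ⟨b, fun a ha => le_trans ha (hk1 a)⟩)
  have hξk : Tendsto (fun i => ((α * s (k i) : ℝ) : UnitAddCircle)) atTop (nhds ξ) :=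
    hξ.comp hk_top
  refine ⟨η - ξ, ?_⟩
  have heq : ∀ i, ((α * t i : ℝ) : UnitAddCircle) =
      ((α * u i : ℝ) : UnitAddCircle) - ((α * s (k i) : ℝ) : UnitAddCircle) := by
    intro i
    have : (α * t i : ℝ) = α * u i - α * s (k i) := by simp [hu]; ring
    rw [this, sub_eq_add_neg, QuotientAddGroup.mk_add, QuotientAddGroup.mk_neg,
      ← sub_eq_add_neg]
  simp_rw [heq]
  exact hη.sub hξk
end

section
/- Let φ be a flow on X with orbit maps f = φ_x and g = φ_y. If x and y both lie in a common compact minimal set M of φ (so that the closure of each orbit equals M), then E_f = E_g. -/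
open Filter Topology

lemma expGroup_subset {X : Type*} [MetricSpace X]
    (φ : ℝ → X → X) (hφ : ∀ t : ℝ, Continuous (φ t))
    (hadd : ∀ s t : ℝ, ∀ x : X, φ (s + t) x = φ s (φ t x))
    (x y : X) (hyx : y ∈ closure (Set.range fun t : ℝ => φ t x)) :
    expGroup (fun t : ℝ => φ t x) ⊆ expGroup (fun t : ℝ => φ t y) := by
  intro α hα t ht
  obtain ⟨z, hz⟩ := ht
  -- choose u
  have H : ∀ i : ℕ, ∃ s : ℝ, dist (φ s x) y < 1/(i+1) ∧
      dist (φ (t i) (φ s x)) (φ (t i) y) < 1/(i+1) := by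
    intro i
    have hpos : (0:ℝ) < 1/(i+1) := by positivity
    obtain ⟨δ, hδ, hδ'⟩ := Metric.continuousAt_iff.mp ((hφ (t i)).continuousAt (x := y)) _ hpos
    obtain ⟨b, hb, hbd⟩ := Metric.mem_closure_iff.mp hyx (min δ (1/(i+1))) (lt_min hδ hpos)
    obtain ⟨s, rfl⟩ := hb
    refine ⟨s, ?_, ?_⟩
    · rw [dist_comm]; exact hbd.trans_le (min_le_right _ _)
    · exact hδ' (by rw [dist_comm] at hbd; exact hbd.trans_le (min_le_left _ _))
  choose u hu1 hu2 using H
  have hlim : Tendsto (fun i : ℕ => 1/((i:ℝ)+1)) atTop (nhds 0) :=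
    tendsto_one_div_add_atTop_nhds_zero_nat
  have h1 : Tendsto (fun i => φ (u i) x) atTop (nhds y) := by
    rw [tendsto_iff_dist_tendsto_zero]
    exact squeeze_zero (fun i => dist_nonneg) (fun i => (hu1 i).le) hlim
  have h2 : Tendsto (fun i => φ (t i + u i) x) atTop (nhds z) := by
    rw [tendsto_iff_dist_tendsto_zero]
    have hz' := (tendsto_iff_dist_tendsto_zero).mp hz
    have : Tendsto (fun i : ℕ => 1/((i:ℝ)+1) + dist (φ (t i) y) z) atTop (nhds (0+0)) :=
      hlim.add hz'
    rw [add_zero] at this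
    refine squeeze_zero (fun i => dist_nonneg) (fun i => ?_) this
    rw [hadd]
    exact (dist_triangle _ _ _).trans (by gcongr; exact (hu2 i).le)
  obtain ⟨ξ0, hξ0⟩ := hα u ⟨y, h1⟩
  obtain ⟨ξ1, hξ1⟩ := hα (fun i => t i + u i) ⟨z, h2⟩
  refine ⟨ξ1 - ξ0, ?_⟩
  have key : ∀ i, ((α * t i : ℝ) : UnitAddCircle) =
      ((α * (t i + u i) : ℝ) : UnitAddCircle) - ((α * u i : ℝ) : UnitAddCircle) := by
    intro i
    have : (α * t i : ℝ) = α * (t i + u i) - α * u i := by ring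
    rw [this]
    exact QuotientAddGroup.mk_sub _ _ _
  simp only [key]
  exact hξ1.sub hξ0

theorem exponents_eq_in_minimal_set {X : Type*} [MetricSpace X]
    (φ : ℝ → X → X) (hφ : Continuous fun p : ℝ × X => φ p.1 p.2)
    (h0 : ∀ x : X, φ 0 x = x) (hadd : ∀ s t : ℝ, ∀ x : X, φ (s + t) x = φ s (φ t x))
    (M : Set X) (hMc : IsCompact M) (hMne : M.Nonempty) (hMcl : IsClosed M)
    (hMinv : ∀ t : ℝ, ∀ z ∈ M, φ t z ∈ M)
    (x y : X) (hx : x ∈ M) (hy : y ∈ M)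
    (hxd : closure (Set.range fun t : ℝ => φ t x) = M)
    (hyd : closure (Set.range fun t : ℝ => φ t y) = M) :
    expGroup (fun t : ℝ => φ t x) = expGroup (fun t : ℝ => φ t y) := by
  have hφt : ∀ t : ℝ, Continuous (φ t) := fun t =>
    hφ.comp (Continuous.prodMk_right t)
  apply le_antisymm
  · exact expGroup_subset φ hφt hadd x y (hxd ▸ hy)
  · exact expGroup_subset φ hφt hadd y x (hyd ▸ hx)
end

section
/- Suppose φ is a flow on X, ψ a flow on Y, h : X → Y a continuous surjection, a a nonzero real, and h(φ(t,x)) = ψ(a·t, h(x)) for all t, x (semiconjugacy with time rescaling by a). Then for every x ∈ X, E_{φ_x} ⊇ a · E_{ψ_{h(x)}} = {a·λ | λ ∈ E_{ψ_{h(x)}}}. -/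
open Filter Topology

theorem exponents_semiconjugacy {X Y : Type*} [MetricSpace X] [MetricSpace Y]
    (φ : ℝ → X → X) (hφ : Continuous fun p : ℝ × X => φ p.1 p.2)
    (hφ0 : ∀ x : X, φ 0 x = x) (hφadd : ∀ s t : ℝ, ∀ x : X, φ (s + t) x = φ s (φ t x))
    (ψ : ℝ → Y → Y) (hψ : Continuous fun p : ℝ × Y => ψ p.1 p.2)
    (hψ0 : ∀ y : Y, ψ 0 y = y) (hψadd : ∀ s t : ℝ, ∀ y : Y, ψ (s + t) y = ψ s (ψ t y))
    (h : X → Y) (hc : Continuous h) (hs : Function.Surjective h)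
    (a : ℝ) (ha : a ≠ 0) (hsemi : ∀ t : ℝ, ∀ x : X, h (φ t x) = ψ (a * t) (h x)) :
    ∀ x : X, ∀ lam ∈ expGroup (fun t : ℝ => ψ t (h x)),
      a * lam ∈ expGroup (fun t : ℝ => φ t x) := by
  intro x lam hlam t ht
  obtain ⟨p, hp⟩ := ht
  have := hlam (fun i => a * t i) ⟨h p, by
    have : Tendsto (fun i => h (φ (t i) x)) atTop (nhds (h p)) :=
      (hc.tendsto p).comp hp
    simpa [hsemi] using this⟩
  obtain ⟨ξ, hξ⟩ := this
  exact ⟨ξ, by simpa [mul_comm, mul_assoc, mul_left_comm] using hξ⟩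
end

section
/- If h : X → Y is an equivalence of flows between φ and ψ (a homeomorphism with h(φ(t,x)) = ψ(a·t, h(x)) for all t,x, where a > 0), then for every x ∈ X, E_{φ_x} = {a·λ | λ ∈ E_{ψ_{h(x)}}}. In particular, if a = 1 then E_{φ_x} = E_{ψ_{h(x)}}. -/
open Filter Topology

theorem exponents_equivalence {X Y : Type*} [MetricSpace X] [MetricSpace Y]
    (φ : ℝ → X → X) (hφ : Continuous fun p : ℝ × X => φ p.1 p.2)
    (hφ0 : ∀ x : X, φ 0 x = x) (hφadd : ∀ s t : ℝ, ∀ x : X, φ (s + t) x = φ s (φ t x))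
    (ψ : ℝ → Y → Y) (hψ : Continuous fun p : ℝ × Y => ψ p.1 p.2)
    (hψ0 : ∀ y : Y, ψ 0 y = y) (hψadd : ∀ s t : ℝ, ∀ y : Y, ψ (s + t) y = ψ s (ψ t y))
    (h : X ≃ₜ Y) (a : ℝ) (ha : 0 < a)
    (hsemi : ∀ t : ℝ, ∀ x : X, h (φ t x) = ψ (a * t) (h x)) :
    (∀ x : X, expGroup (fun t : ℝ => φ t x)
        = (fun lam : ℝ => a * lam) '' expGroup (fun t : ℝ => ψ t (h x))) ∧
      (a = 1 → ∀ x : X,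
        expGroup (fun t : ℝ => φ t x) = expGroup (fun t : ℝ => ψ t (h x))) := by
  have key : ∀ x : X, expGroup (fun t : ℝ => φ t x)
      = (fun lam : ℝ => a * lam) '' expGroup (fun t : ℝ => ψ t (h x)) := by
    intro x
    ext α
    constructor
    · intro hα
      refine ⟨α / a, ?_, by field_simp⟩
      intro s hs
      obtain ⟨y, hy⟩ := hs
      have heq : ∀ i, φ (s i / a) x = h.symm (ψ (s i) (h x)) := by
        intro i
        have := hsemi (s i / a) x
        rw [mul_div_cancel₀ _ ha.ne'] at this
        rw [← this, h.symm_apply_apply]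
      have hconv : Tendsto (fun i => φ (s i / a) x) atTop (nhds (h.symm y)) := by
        simp only [heq]
        exact (h.symm.continuous.tendsto y).comp hy
      obtain ⟨ξ, hξ⟩ := hα (fun i => s i / a) ⟨h.symm y, hconv⟩
      refine ⟨ξ, ?_⟩
      have : (fun i => ((α / a * s i : ℝ) : UnitAddCircle))
          = fun i => ((α * (s i / a) : ℝ) : UnitAddCircle) := by
        funext i; congr 1; ring
      rw [this]; exact hξ
    · rintro ⟨lam, hlam, rfl⟩
      intro t ht
      obtain ⟨z, hz⟩ := ht
      have hconv : Tendsto (fun i => ψ (a * t i) (h x)) atTop (nhds (h z)) := by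
        simp only [← hsemi]
        exact (h.continuous.tendsto z).comp hz
      obtain ⟨ξ, hξ⟩ := hlam (fun i => a * t i) ⟨h z, hconv⟩
      refine ⟨ξ, ?_⟩
      have : (fun i => ((a * lam * t i : ℝ) : UnitAddCircle))
          = fun i => ((lam * (a * t i) : ℝ) : UnitAddCircle) := by
        funext i; congr 1; ring
      rw [this]; exact hξ
  refine ⟨key, fun ha1 x => ?_⟩
  subst ha1
  rw [key x]
  simp
end

section
/- Consider the flow φ on the torus T² = (ℝ/ℤ)² defined by φ(t, (x,y)) = (x + π(αt), y + π(t)) for a fixed irrational α. For the orbit f of any point, the exponent group E_f equals the subgroup of ℝ generated by α and 1, i.e., E_f = ℤα + ℤ. -/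
/-!
The inclusion `⊇` holds because for `β = mα + n` the point `π(βt)` is a continuous function of
the orbit point. For `⊆`, restrict to integer times `a`, where the orbit is `p + (π(aα), 0)`:
`β ∈ E_f` says that the character `a ↦ π(aβ)` of `ℤ` is continuous at `0` for the topology pulled
back along the dense embedding `a ↦ π(aα)`, so it extends to a continuous character of the circle
and equals `a ↦ n • π(aα)` for an integer `n`. The extension is made by hand. Continuity at `0`
and additivity make `π(aβ)` Lipschitz in `π(aα)` near `0`; reducing a small `π(aα)` modulo
arbitrarily small ones shows that the lift of `π(aβ)` is a fixed real multiple `m` of the lift of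
`π(aα)`; and `m` is an integer because the lift `1` of `0` must be sent to `0`.
-/
open Filter Topology

local notation "𝕋" => UnitAddCircle

namespace UnitAddCircle

lemma norm_coe_le_abs (y : ℝ) : ‖(y : 𝕋)‖ ≤ |y| := by
  simpa [norm_eq] using round_le y 0

lemma norm_coe_eq_abs {y : ℝ} (hy : |y| ≤ 1 / 2) : ‖(y : 𝕋)‖ = |y| :=
  (AddCircle.norm_coe_eq_abs_iff (p := 1) one_ne_zero).2 (by simpa using hy)

lemma exists_coe_eq_and_abs_eq_norm (x : 𝕋) : ∃ y : ℝ, (y : 𝕋) = x ∧ |y| = ‖x‖ := by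
  obtain ⟨t, rfl⟩ := QuotientAddGroup.mk_surjective x
  exact ⟨t - round t, by simp, norm_eq.symm⟩

lemma coe_mul_intCast (x : ℝ) (n : ℤ) : ((x * n : ℝ) : 𝕋) = n • (x : 𝕋) := by
  rw [mul_comm, ← zsmul_eq_mul, AddCircle.coe_zsmul]

lemma coe_intCast (n : ℤ) : ((n : ℝ) : 𝕋) = 0 :=
  (AddCircle.coe_eq_zero_iff 1).2 ⟨n, zsmul_one _⟩

lemma nat_mul_norm_le_of_forall_norm_nsmul_le {x : 𝕋} {k : ℕ}
    (h : ∀ j ≤ k, ‖j • x‖ ≤ 1 / 4) : k * ‖x‖ ≤ 1 / 4 := by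
  rcases Nat.eq_zero_or_pos k with rfl | hk
  · norm_num
  obtain ⟨y, rfl, hy⟩ := exists_coe_eq_and_abs_eq_norm x
  have hy4 : |y| ≤ 1 / 4 := by simpa [hy] using h 1 hk
  have hmul : ∀ j ≤ k, |j * y| ≤ 1 / 4 := by
    intro j
    induction j with
    | zero => simp
    | succ j ih =>
      intro hj
      have hle : |(j + 1 : ℕ) * y| ≤ 1 / 2 := by
        calc |(j + 1 : ℕ) * y| = |j * y + y| := by push_cast; ring_nf
          _ ≤ |j * y| + |y| := abs_add_le _ _
          _ ≤ 1 / 2 := by linarith [ih (by omega)]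
      rw [← norm_coe_eq_abs hle, ← nsmul_eq_mul, AddCircle.coe_nsmul]
      exact h _ hj
  simpa [abs_mul, hy] using hmul k le_rfl

end UnitAddCircle

lemma le_div_of_forall_nat_mul_le {r b δ : ℝ} (hr₀ : 0 ≤ r) (hr : r < δ / 2)
    (h : ∀ k : ℕ, k * r < δ → k * b ≤ 1 / 4) : b ≤ r / (2 * δ) := by
  have hδ : 0 < δ := by linarith
  by_contra! hb
  have hb₀ : 0 < b := lt_of_le_of_lt (by positivity) hb
  have hrb : r < 2 * δ * b := by rwa [div_lt_iff₀ (by positivity), mul_comm] at hb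
  set k := ⌊(4 * b)⁻¹⌋₊ + 1
  have hk : (4 * b)⁻¹ < k := by simpa [k] using Nat.lt_floor_add_one (4 * b)⁻¹
  have hk' : (k : ℝ) ≤ (4 * b)⁻¹ + 1 := by
    simpa [k] using Nat.floor_le (inv_nonneg.2 (by positivity : (0 : ℝ) ≤ 4 * b))
  have h1 : 1 < k * (4 * b) := by rwa [inv_lt_iff_one_lt_mul₀ (by positivity)] at hk
  have h2 : k * r < δ := by
    calc k * r ≤ ((4 * b)⁻¹ + 1) * r := by gcongr
      _ = r / (4 * b) + r := by ring
      _ < δ / 2 + δ / 2 := by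
        have : r / (4 * b) < δ / 2 := by rw [div_lt_iff₀ (by positivity)]; linarith
        linarith
      _ = δ := by ring
  linarith [h k h2]

lemma exists_sub_int_mul_mem_Ico {u : ℝ} (hu : 0 < u) (y : ℝ) :
    ∃ k : ℤ, y - k * u ∈ Set.Ico 0 u := by
  refine ⟨toIcoDiv hu 0 y, ?_⟩
  simpa [← Int.cast_smul_eq_zsmul ℝ] using sub_toIcoDiv_zsmul_mem_Ico hu 0 y

namespace AddMonoidHom

open UnitAddCircle

variable {G : Type*} [AddCommGroup G] {A B : G →+ 𝕋}

lemma exists_coe_eq_of_denseRange (hA : DenseRange A) {ε : ℝ} (hε : 0 < ε) :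
    ∃ (h : G) (u : ℝ), A h = u ∧ 0 < u ∧ u < ε := by
  have hU : IsOpen (((↑) : ℝ → 𝕋) '' Set.Ioo 0 ε) :=
    QuotientAddGroup.isOpenMap_coe _ isOpen_Ioo
  obtain ⟨h, u, hu, hAh⟩ := hA.exists_mem_open hU ⟨_, ε / 2, ⟨by positivity, by linarith⟩, rfl⟩
  exact ⟨h, u, hAh.symm, hu⟩

lemma norm_le_of_forall_norm_lt_quarter {δ : ℝ} (hδ : ∀ g, ‖A g‖ < δ → ‖B g‖ < 1 / 4)
    {g : G} (hg : ‖A g‖ < δ / 2) : ‖B g‖ ≤ ‖A g‖ / (2 * δ) := by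
  refine le_div_of_forall_nat_mul_le (norm_nonneg _) hg fun k hk => ?_
  refine nat_mul_norm_le_of_forall_norm_nsmul_le fun j hj => ?_
  rw [← map_nsmul]
  refine (hδ _ ?_).le
  calc ‖A (j • g)‖ = ‖j • A g‖ := by rw [map_nsmul]
    _ ≤ j * ‖A g‖ := norm_nsmul_le
    _ ≤ k * ‖A g‖ := by gcongr
    _ < δ := hk

lemma map_sub_zsmul_eq_coe (φ : G →+ 𝕋) (k : ℤ) {g h : G} {y u : ℝ} (hy : φ g = y) (hu : φ h = u) :
    φ (g - k • h) = ((y - k * u : ℝ) : 𝕋) := by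
  rw [map_sub, map_zsmul, hy, hu, AddCircle.coe_sub, ← AddCircle.coe_zsmul, zsmul_eq_mul]

section Lipschitz

variable {C δ : ℝ} (hC : 0 ≤ C) (hCδ : C * δ ≤ 1 / 8)
  (hLip : ∀ g, ‖A g‖ < δ → ‖B g‖ ≤ C * ‖A g‖)
include hC hLip

lemma norm_le_of_coe_eq {g : G} {y : ℝ} (hy : A g = y) (hyδ : |y| < δ) : ‖B g‖ ≤ C * |y| := by
  have hAy : ‖A g‖ ≤ |y| := hy ▸ norm_coe_le_abs y
  exact (hLip g (hAy.trans_lt hyδ)).trans (by gcongr)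

lemma exists_coe_eq_abs_le {h : G} {u : ℝ} (hu : A h = u) (huδ : |u| < δ) :
    ∃ v : ℝ, B h = v ∧ |v| ≤ C * |u| := by
  obtain ⟨v, hv, hvn⟩ := exists_coe_eq_and_abs_eq_norm (B h)
  exact ⟨v, hv.symm, hvn ▸ norm_le_of_coe_eq hC hLip hu huδ⟩

include hCδ

lemma abs_sub_div_mul_le {h g : G} {u v y z : ℝ} (hu : A h = u) (hu₀ : 0 < u) (huδ : u < δ)
    (hv : B h = v) (hvu : |v| ≤ C * u) (hy : A g = y) (hyδ : |y| < δ) (hz : B g = z)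
    (hzy : |z| ≤ C * |y|) : |z - v / u * y| ≤ 2 * C * u := by
  -- `g - k • h` has `A`-lift in `[0, u)`; the lifts of `B` then add up exactly, being all small
  obtain ⟨k, hk₀, hk⟩ := exists_sub_int_mul_mem_Ico hu₀ y
  have hku : |k * u| ≤ |y| + u := by
    rw [abs_le]; constructor <;> cases abs_cases y <;> linarith
  have hA' := A.map_sub_zsmul_eq_coe k hy hu
  have hB' := B.map_sub_zsmul_eq_coe k hz hv
  have hrem : |y - k * u| < u := by rw [abs_lt]; constructor <;> linarith
  have hkv : |z - k * v| ≤ C * u := by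
    have hkv' : |k * v| ≤ C * (|y| + u) := by
      calc |k * v| = |(k : ℝ)| * |v| := abs_mul _ _
        _ ≤ |(k : ℝ)| * (C * u) := by gcongr
        _ = C * |k * u| := by rw [abs_mul, abs_of_pos hu₀]; ring
        _ ≤ C * (|y| + u) := by gcongr
    have hhalf : |z - k * v| ≤ 1 / 2 := by
      have : C * |y| ≤ C * δ := by gcongr
      have : C * u ≤ C * δ := by gcongr
      calc |z - k * v| ≤ |z| + |k * v| := abs_sub _ _
        _ ≤ 1 / 2 := by nlinarith
    rw [← norm_coe_eq_abs hhalf, ← hB']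
    calc ‖B (g - k • h)‖ ≤ C * |y - k * u| := norm_le_of_coe_eq hC hLip hA' (hrem.trans huδ)
      _ ≤ C * u := by gcongr
  have hvu' : |v / u| ≤ C := by rw [abs_div, abs_of_pos hu₀, div_le_iff₀ hu₀]; exact hvu
  calc |z - v / u * y| = |(z - k * v) - v / u * (y - k * u)| := by
        congr 1; field_simp; ring
    _ ≤ |z - k * v| + |v / u| * |y - k * u| := by rw [← abs_mul]; exact abs_sub _ _
    _ ≤ C * u + C * u := by gcongr
    _ = 2 * C * u := by ring

lemma exists_coe_mul_eq_of_abs_lt (hA : DenseRange A) (hδ : 0 < δ) :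
    ∃ m : ℝ, ∀ g (y : ℝ), A g = y → |y| < δ → B g = (m * y : ℝ) := by
  obtain ⟨h₀, u₀, hu₀, hu₀pos, hu₀δ⟩ := exists_coe_eq_of_denseRange hA hδ
  obtain ⟨v₀, hv₀, hv₀u⟩ := exists_coe_eq_abs_le hC hLip hu₀ (by rwa [abs_of_pos hu₀pos])
  rw [abs_of_pos hu₀pos] at hv₀u
  refine ⟨v₀ / u₀, fun g y hy hyδ => ?_⟩
  obtain ⟨z, hz, hzy⟩ := exists_coe_eq_abs_le hC hLip hy hyδ
  rw [hz]
  congr 1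
  set K := 2 * C * (1 + |y| / u₀)
  refine eq_of_forall_dist_le fun ε hε => ?_
  obtain ⟨h, u, hu, hupos, huε⟩ :=
    exists_coe_eq_of_denseRange hA (lt_min hδ (by positivity : 0 < ε / (K + 1)))
  obtain ⟨v, hv, hvu⟩ := exists_coe_eq_abs_le hC hLip hu
    (by rw [abs_of_pos hupos]; exact huε.trans_le (min_le_left _ _))
  rw [abs_of_pos hupos] at hvu
  have huδ : u < δ := huε.trans_le (min_le_left _ _)
  have hzg := abs_sub_div_mul_le hC hCδ hLip hu hupos huδ hv hvu hy hyδ hz hzy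
  have hz₀ := abs_sub_div_mul_le hC hCδ hLip hu hupos huδ hv hvu hu₀ (by rwa [abs_of_pos hu₀pos])
    hv₀ (by rwa [abs_of_pos hu₀pos])
  have hK : 0 ≤ K := by positivity
  calc dist z (v₀ / u₀ * y) = |(z - v / u * y) - y / u₀ * (v₀ - v / u * u₀)| := by
        rw [Real.dist_eq]; congr 1; field_simp; ring
    _ ≤ |z - v / u * y| + |y / u₀ * (v₀ - v / u * u₀)| := abs_sub _ _
    _ = |z - v / u * y| + |y| / u₀ * |v₀ - v / u * u₀| := by
        rw [abs_mul, abs_div, abs_of_pos hu₀pos]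
    _ ≤ 2 * C * u + |y| / u₀ * (2 * C * u) := by gcongr
    _ = K * u := by ring
    _ ≤ K * (ε / (K + 1)) := by gcongr; exact huε.le.trans (min_le_right _ _)
    _ ≤ ε := by
        rw [mul_div_assoc', div_le_iff₀ (by positivity)]; nlinarith

lemma exists_coe_mul_eq (hA : DenseRange A) (hδ : 0 < δ) :
    ∃ m : ℝ, ∀ g (y : ℝ), A g = y → B g = (m * y : ℝ) := by
  obtain ⟨m, hm⟩ := exists_coe_mul_eq_of_abs_lt hC hCδ hLip hA hδ
  obtain ⟨h, u, hu, hu₀, huδ⟩ := exists_coe_eq_of_denseRange hA hδ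
  refine ⟨m, fun g y hy => ?_⟩
  obtain ⟨k, hk₀, hk⟩ := exists_sub_int_mul_mem_Ico hu₀ y
  have hrem : |y - k * u| < δ := by rw [abs_lt]; constructor <;> linarith
  calc B g = B (g - k • h) + k • B h := by rw [map_sub, map_zsmul, sub_add_cancel]
    _ = ((m * (y - k * u) : ℝ) : 𝕋) + k • ((m * u : ℝ) : 𝕋) := by
        rw [hm _ _ (A.map_sub_zsmul_eq_coe k hy hu) hrem, hm _ _ hu (by rwa [abs_of_pos hu₀])]
    _ = (m * y : ℝ) := by
        rw [← AddCircle.coe_zsmul, ← AddCircle.coe_add, zsmul_eq_mul]; ring_nf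

end Lipschitz

theorem exists_eq_zsmul_of_tendsto_comap (hA : DenseRange A)
    (hB : Tendsto B (comap A (𝓝 0)) (𝓝 0)) : ∃ n : ℤ, B = n • A := by
  obtain ⟨δ, hδ, hδB⟩ : ∃ δ > 0, ∀ g, ‖A g‖ < δ → ‖B g‖ < 1 / 4 := by
    simpa using ((Metric.nhds_basis_ball.comap A).tendsto_iff Metric.nhds_basis_ball).1 hB (1 / 4)
      (by norm_num)
  have hLip : ∀ g, ‖A g‖ < δ / 8 → ‖B g‖ ≤ (2 * δ)⁻¹ * ‖A g‖ := fun g hg => by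
    rw [inv_mul_eq_div]
    exact norm_le_of_forall_norm_lt_quarter hδB (by linarith)
  obtain ⟨m, hm⟩ := exists_coe_mul_eq (by positivity) (by field_simp; norm_num) hLip hA
    (by positivity : 0 < δ / 8)
  obtain ⟨n, hn⟩ : ∃ n : ℤ, n • (1 : ℝ) = m := by
    rw [← AddCircle.coe_eq_zero_iff, ← mul_one m, ← map_zero B]
    exact (hm 0 1 (by rw [map_zero, AddCircle.coe_period])).symm
  refine ⟨n, AddMonoidHom.ext fun g => ?_⟩
  obtain ⟨y, hy⟩ := QuotientAddGroup.mk_surjective (A g)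
  rw [hm g y hy.symm, ← hn, zsmul_one, ← zsmul_eq_mul, AddCircle.coe_zsmul, smul_apply, ← hy]

end AddMonoidHom

lemma mem_expGroup_of_continuous {X : Type*} [MetricSpace X] {f : ℝ → X} {β : ℝ} (g : X → 𝕋)
    (hg : Continuous g) (c : 𝕋) (hgf : ∀ t, g (f t) = ((β * t : ℝ) : 𝕋) + c) : β ∈ expGroup f := by
  rintro t ⟨x, hx⟩
  refine ⟨g x - c, ?_⟩
  simpa [hgf] using ((hg.tendsto x).comp hx).sub_const c

lemma tendsto_coe_mul_of_mem_expGroup {X : Type*} [MetricSpace X] {f : ℝ → X} {β : ℝ}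
    (hβ : β ∈ expGroup f) {t : ℕ → ℝ} (ht : Tendsto (fun i => f (t i)) atTop (𝓝 (f 0))) :
    Tendsto (fun i => ((β * t i : ℝ) : 𝕋)) atTop (𝓝 0) := by
  -- interleaving `t` with zeros forces the limit of `β * t i` to be that of `β * 0`
  set s : ℕ → ℝ := fun i => if Even i then t (i / 2) else 0
  have hs_even (i : ℕ) : s (2 * i) = t i := by
    simp only [s, even_two_mul, if_true]; congr 1; omega
  have hs_odd (i : ℕ) : s (2 * i + 1) = 0 := by
    simp only [s, Nat.not_even_two_mul_add_one, if_false]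
  have hfs : Tendsto (fun i => f (s i)) atTop (𝓝 (f 0)) := by
    rw [tendsto_iff_dist_tendsto_zero] at ht ⊢
    refine squeeze_zero (fun _ => dist_nonneg) (fun i => ?_)
      (ht.comp (Nat.tendsto_div_const_atTop two_ne_zero))
    by_cases hi : Even i
    · simp only [s, if_pos hi]; exact le_rfl
    · simp only [s, if_neg hi, dist_self]; exact dist_nonneg
  obtain ⟨ξ, hξ⟩ := hβ s ⟨f 0, hfs⟩
  have hodd : Tendsto (fun i => 2 * i + 1) atTop atTop :=
    tendsto_atTop_atTop.2 fun b => ⟨b, fun a ha => by omega⟩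
  have heven : Tendsto (fun i => 2 * i) atTop atTop :=
    tendsto_atTop_atTop.2 fun b => ⟨b, fun a ha => by omega⟩
  have hξ₀ : ξ = 0 := by
    refine tendsto_nhds_unique (hξ.comp hodd) ?_
    simp only [Function.comp_def, hs_odd, mul_zero, AddCircle.coe_zero]
    exact tendsto_const_nhds
  subst hξ₀
  simpa only [Function.comp_def, hs_even] using hξ.comp heven

open UnitAddCircle

def linearFlow (α : ℝ) (p : 𝕋 × 𝕋) (t : ℝ) : 𝕋 × 𝕋 :=
  (p.1 + ((α * t : ℝ) : 𝕋), p.2 + ((t : ℝ) : 𝕋))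

lemma tendsto_comap_of_mem_expGroup_linearFlow {α β : ℝ} {p : 𝕋 × 𝕋}
    (hβ : β ∈ expGroup (linearFlow α p)) :
    Tendsto (zmultiplesHom 𝕋 (β : 𝕋)) (comap (zmultiplesHom 𝕋 (α : 𝕋)) (𝓝 0)) (𝓝 0) := by
  refine tendsto_iff_seq_tendsto.2 fun u hu => ?_
  rw [tendsto_comap_iff] at hu
  have hflow : Tendsto (fun i => linearFlow α p (u i)) atTop (𝓝 (linearFlow α p 0)) := by
    simpa [linearFlow, coe_mul_intCast, coe_intCast] using
      (tendsto_const_nhds (x := p.1)).add hu |>.prodMk_nhds (tendsto_const_nhds (x := p.2))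
  simpa [coe_mul_intCast, Function.comp_def] using
    tendsto_coe_mul_of_mem_expGroup hβ hflow

theorem exponents_linear_torus_flow (α : ℝ) (hα : Irrational α)
    (p : UnitAddCircle × UnitAddCircle) :
    expGroup (fun t : ℝ =>
        (p.1 + ((α * t : ℝ) : UnitAddCircle), p.2 + ((t : ℝ) : UnitAddCircle)))
      = {β : ℝ | ∃ m n : ℤ, β = m * α + n} := by
  change expGroup (linearFlow α p) = _
  ext β
  constructor
  · intro hβ
    have hA : DenseRange (zmultiplesHom 𝕋 (α : 𝕋)) :=
      AddCircle.denseRange_zsmul_coe_iff.2 (by simpa using hα)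
    obtain ⟨m, hm⟩ :=
      AddMonoidHom.exists_eq_zsmul_of_tendsto_comap hA (tendsto_comap_of_mem_expGroup_linearFlow hβ)
    have hβm : ((β - m * α : ℝ) : 𝕋) = 0 := by
      simpa [sub_eq_zero, ← coe_mul_intCast, mul_comm] using
        DFunLike.congr_fun hm 1
    obtain ⟨n, hn⟩ := (AddCircle.coe_eq_zero_iff 1).1 hβm
    exact ⟨m, n, by rw [zsmul_one] at hn; linarith⟩
  · rintro ⟨m, n, rfl⟩
    refine mem_expGroup_of_continuous (fun x => m • (x.1 - p.1) + n • (x.2 - p.2)) (by fun_prop) 0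
      fun t => ?_
    simp only [linearFlow, add_sub_cancel_left, ← coe_mul_intCast, ← AddCircle.coe_add, add_zero]
    congr 1
    ring
end

section
/- For the rotation flow φ(t, x) = x + π(αt) on the circle ℝ/ℤ with α ≠ 0, the exponent group of any orbit equals ℤα, the cyclic subgroup of ℝ generated by α. -/
/-!
Along the times `i / α` the orbit sits at `p`, and there `π(β t)` is the arithmetic progression
`i • π(β / α)`, which converges only if `π(β / α) = 0`, i.e. `β ∈ ℤα`. Conversely, convergence of
the orbit is convergence of `π(α t)`, and `π(nα t) = n • π(α t)` follows by continuity of `n • ·`.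
-/

open Filter Topology

theorem eq_zero_of_tendsto_nsmul {G : Type*} [AddCommGroup G] [TopologicalSpace G]
    [ContinuousSub G] [T2Space G] {c ξ : G}
    (h : Tendsto (fun n : ℕ => n • c) atTop (𝓝 ξ)) : c = 0 := by
  have hstep : Tendsto (fun n : ℕ => (n + 1) • c - n • c) atTop (𝓝 (ξ - ξ)) :=
    (h.comp (tendsto_add_atTop_nat 1)).sub h
  simp only [succ_nsmul, add_sub_cancel_left, sub_self] at hstep
  exact tendsto_nhds_unique tendsto_const_nhds hstep

theorem UnitAddCircle.coe_natCast_eq_zero (n : ℕ) : ((n : ℝ) : UnitAddCircle) = 0 :=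
  (AddCircle.coe_eq_zero_iff _).2 ⟨n, by simp⟩

theorem Filter.Tendsto.addCircle_coe_intCast_mul {ι : Type*} {l : Filter ι} {T α : ℝ}
    {t : ι → ℝ} {ξ : AddCircle T} (h : Tendsto (fun i => ((α * t i : ℝ) : AddCircle T)) l (𝓝 ξ))
    (n : ℤ) : Tendsto (fun i => ((n * α * t i : ℝ) : AddCircle T)) l (𝓝 (n • ξ)) :=
  (((continuous_zsmul n).tendsto ξ).comp h).congr fun i => by
    rw [Function.comp_apply, ← AddCircle.coe_zsmul, zsmul_eq_mul, mul_assoc]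

theorem exponents_rotation_flow (α : ℝ) (hα : α ≠ 0) (p : UnitAddCircle) :
    expGroup (fun t : ℝ => p + ((α * t : ℝ) : UnitAddCircle))
      = {β : ℝ | ∃ n : ℤ, β = n * α} := by
  ext β
  constructor
  · intro hβ
    have hreturn (i : ℕ) : p + ((α * (i / α) : ℝ) : UnitAddCircle) = p := by
      rw [mul_div_cancel₀ _ hα, UnitAddCircle.coe_natCast_eq_zero, add_zero]
    obtain ⟨ξ, hξ⟩ := hβ (fun i : ℕ => i / α) ⟨p, by simp only [hreturn]; exact tendsto_const_nhds⟩
    have hβα : ((β / α : ℝ) : UnitAddCircle) = 0 := by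
      refine eq_zero_of_tendsto_nsmul (hξ.congr fun i => ?_)
      rw [← AddCircle.coe_nsmul, nsmul_eq_mul, mul_div_left_comm]
    obtain ⟨n, hn⟩ := (AddCircle.coe_eq_zero_iff _).1 hβα
    refine ⟨n, ?_⟩
    rw [zsmul_one, eq_div_iff hα] at hn
    exact hn.symm
  · rintro ⟨n, rfl⟩ t ⟨x, hx⟩
    have hrot : Tendsto (fun i => ((α * t i : ℝ) : UnitAddCircle)) atTop (𝓝 (x - p)) := by
      simpa only [add_sub_cancel_left] using hx.sub_const p
    exact ⟨n • (x - p), hrot.addCircle_coe_intCast_mul n⟩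
end

section
/- Let g : ℝ → ℝ² be the piecewise-linear map with g(t) = (frac·2^{-(⌊t⌋+1)} + (1−frac)·2^{-⌊t⌋}, frac) for odd ⌊t⌋ and with second coordinate 1−frac for even ⌊t⌋ (where frac = t − ⌊t⌋), and let X = g(ℝ) ∪ {(0, 1/2)}. Then for f : ℝ → X, t ↦ g(t), the exponent group E_f equals ℤ. -/
open Filter Topology

noncomputable def sineCurveMap (t : ℝ) : ℝ × ℝ :=
  if Odd ⌊t⌋ then
    (Int.fract t * (2 : ℝ) ^ (-(⌊t⌋ + 1)) + (1 - Int.fract t) * (2 : ℝ) ^ (-⌊t⌋),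
      Int.fract t)
  else
    (Int.fract t * (2 : ℝ) ^ (-(⌊t⌋ + 1)) + (1 - Int.fract t) * (2 : ℝ) ^ (-⌊t⌋),
      1 - Int.fract t)

noncomputable def sineCurveSpace : Set (ℝ × ℝ) :=
  Set.range sineCurveMap ∪ {((0 : ℝ), (1 / 2 : ℝ))}

lemma scm_fst (t : ℝ) :
    (sineCurveMap t).1 = (2 - Int.fract t) * (2 : ℝ) ^ (-(⌊t⌋ + 1)) := by
  have h : ((2:ℝ)) ^ (-⌊t⌋) = (2:ℝ) ^ (-(⌊t⌋ + 1)) * 2 := by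
    rw [show (-⌊t⌋ : ℤ) = (-(⌊t⌋ + 1)) + 1 by ring, zpow_add₀ (two_ne_zero)]
    norm_num
  unfold sineCurveMap
  split <;> simp only [h] <;> ring

lemma scm_fst_lt (t : ℝ) : (2 : ℝ) ^ (-(⌊t⌋ + 1)) < (sineCurveMap t).1 := by
  rw [scm_fst]
  nlinarith [Int.fract_lt_one t, zpow_pos (by norm_num : (0:ℝ) < 2) (-(⌊t⌋ + 1))]

lemma scm_fst_le (t : ℝ) : (sineCurveMap t).1 ≤ (2 : ℝ) ^ (-⌊t⌋) := by
  rw [scm_fst, show (-⌊t⌋ : ℤ) = (-(⌊t⌋ + 1)) + 1 by ring, zpow_add₀ (two_ne_zero)]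
  nlinarith [Int.fract_nonneg t, zpow_pos (by norm_num : (0:ℝ) < 2) (-(⌊t⌋ + 1))]

lemma scm_strictAnti : StrictAnti (fun t => (sineCurveMap t).1) := by
  intro a b hab
  have hf : ⌊a⌋ ≤ ⌊b⌋ := Int.floor_le_floor hab.le
  rcases hf.eq_or_lt with h | h
  · simp only [scm_fst, ← h]
    have : Int.fract a < Int.fract b := by
      unfold Int.fract; rw [← h] at *; linarith
    have hp := zpow_pos (by norm_num : (0:ℝ) < 2) (-(⌊a⌋ + 1))
    nlinarith
  · calc (sineCurveMap b).1 ≤ (2:ℝ) ^ (-⌊b⌋) := scm_fst_le b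
      _ ≤ (2:ℝ) ^ (-(⌊a⌋ + 1)) := zpow_le_zpow_right₀ one_le_two (by omega)
      _ < (sineCurveMap a).1 := scm_fst_lt a

lemma scm_snd (t : ℝ) : |(sineCurveMap t).2 - 1/2| = |Int.fract t - 1/2| := by
  unfold sineCurveMap
  split
  · rfl
  · rw [show (1 - Int.fract t - 1/2 : ℝ) = -(Int.fract t - 1/2) by ring, abs_neg]

lemma scm_half (i : ℕ) :
    sineCurveMap ((i : ℝ) + 1/2) = ((3/2) * (2:ℝ) ^ (-((i:ℤ) + 1)), 1/2) := by
  have hfl : ⌊(i : ℝ) + 1/2⌋ = (i : ℤ) := by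
    rw [Int.floor_eq_iff]
    constructor <;> [push_cast; push_cast] <;> linarith
  have hfr : Int.fract ((i : ℝ) + 1/2) = 1/2 := by
    rw [Int.fract, hfl]; push_cast; ring
  have h1 : (sineCurveMap ((i:ℝ) + 1/2)).1 = (3/2) * (2:ℝ) ^ (-((i:ℤ) + 1)) := by
    rw [scm_fst, hfr, hfl]; norm_num
  have h2 : (sineCurveMap ((i:ℝ) + 1/2)).2 = 1/2 := by
    unfold sineCurveMap
    split <;> rw [hfr] <;> norm_num
  exact Prod.ext h1 h2

lemma coe_int_mul (m : ℤ) (r : ℝ) :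
    ((m * r : ℝ) : UnitAddCircle) = ((m * Int.fract r : ℝ) : UnitAddCircle) := by
  have h0 : (((m * r : ℝ) - (m * Int.fract r : ℝ) : ℝ) : AddCircle (1:ℝ)) = 0 :=
    (AddCircle.coe_eq_zero_iff 1).2 ⟨m * ⌊r⌋, by
      rw [zsmul_eq_mul, Int.fract]; push_cast; ring⟩
  have := (QuotientAddGroup.mk_sub _ (m * r) (m * Int.fract r)).symm.trans h0
  exact sub_eq_zero.mp this

lemma continuous_coe_circle : Continuous ((↑) : ℝ → UnitAddCircle) :=
  AddCircle.continuous_mk' 1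

theorem exponents_sine_curve :
    expGroup (fun t : ℝ =>
        (⟨sineCurveMap t, Or.inl ⟨t, rfl⟩⟩ : sineCurveSpace))
      = {α : ℝ | ∃ n : ℤ, α = n} := by
  ext α
  simp only [expGroup, Set.mem_setOf_eq]
  constructor
  · -- E_f ⊆ ℤ
    intro hα
    have hconv : ∃ x : sineCurveSpace,
        Tendsto (fun i : ℕ =>
          (⟨sineCurveMap ((i:ℝ) + 1/2), Or.inl ⟨_, rfl⟩⟩ : sineCurveSpace)) atTop (nhds x) := by
      refine ⟨⟨((0:ℝ), (1/2:ℝ)), Or.inr rfl⟩, ?_⟩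
      rw [tendsto_subtype_rng]
      show Tendsto (fun i : ℕ => sineCurveMap ((i:ℝ) + 1/2)) atTop (nhds ((0:ℝ), (1/2:ℝ)))
      simp only [scm_half]
      refine Tendsto.prodMk_nhds ?_ tendsto_const_nhds
      have hp : ∀ i : ℕ, (2:ℝ) ^ (-((i:ℤ) + 1)) = (1/2:ℝ) ^ (i + 1) := by
        intro i
        rw [one_div, inv_pow, zpow_neg, ← zpow_natCast]
        norm_num
      simp only [hp]
      have := ((tendsto_pow_atTop_nhds_zero_of_lt_one (by norm_num : (0:ℝ) ≤ 1/2)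
        (by norm_num : (1/2:ℝ) < 1)).comp (tendsto_add_atTop_nat 1)).const_mul (3/2:ℝ)
      simpa using this
    obtain ⟨ξ, hξ⟩ := hα (fun i : ℕ => (i:ℝ) + 1/2) hconv
    have hξ' : Tendsto (fun i : ℕ =>
        ((α * ((i:ℝ) + 1/2) : ℝ) : UnitAddCircle) + ((α : ℝ) : UnitAddCircle))
        atTop (nhds ξ) := by
      have h1 := hξ.comp (tendsto_add_atTop_nat 1)
      have heq : ∀ i : ℕ, ((α * (((i+1:ℕ):ℝ) + 1/2) : ℝ) : UnitAddCircle)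
          = ((α * ((i:ℝ) + 1/2) : ℝ) : UnitAddCircle) + ((α : ℝ) : UnitAddCircle) := by
        intro i
        rw [show (α * (((i+1:ℕ):ℝ) + 1/2) : ℝ) = (α * ((i:ℝ) + 1/2)) + α by push_cast; ring]
        exact QuotientAddGroup.mk_add _ _ _
      simpa only [Function.comp_def, heq] using h1
    have h2 : Tendsto (fun i : ℕ =>
        ((α * ((i:ℝ) + 1/2) : ℝ) : UnitAddCircle) + ((α : ℝ) : UnitAddCircle))
        atTop (nhds (ξ + ((α : ℝ) : UnitAddCircle))) := hξ.add_const _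
    have h3 : ξ = ξ + ((α : ℝ) : UnitAddCircle) := tendsto_nhds_unique hξ' h2
    have h4 : ((α : ℝ) : UnitAddCircle) = 0 := by rwa [left_eq_add] at h3
    obtain ⟨n, hn⟩ := (AddCircle.coe_eq_zero_iff 1).mp h4
    exact ⟨n, by rw [← hn, zsmul_eq_mul, mul_one]⟩
  · -- ℤ ⊆ E_f
    rintro ⟨n, rfl⟩ t ⟨x, hx⟩
    rw [tendsto_subtype_rng] at hx
    rcases x.2 with ⟨s, hs⟩ | hp
    · -- limit is on the curve
      have hfst : Tendsto (fun i => (sineCurveMap (t i)).1) atTop (nhds ((sineCurveMap s).1)) := by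
        rw [hs]
        exact (continuous_fst.tendsto _).comp hx
      have ht : Tendsto t atTop (nhds s) := by
        rw [tendsto_order]
        constructor
        · intro b hb
          have h1 : (sineCurveMap b).1 > (sineCurveMap s).1 := scm_strictAnti hb
          filter_upwards [hfst.eventually_lt_const h1] with i hi
          by_contra hc
          push_neg at hc
          exact absurd (scm_strictAnti.antitone hc) (not_le.mpr hi)
        · intro b hb
          have h1 : (sineCurveMap b).1 < (sineCurveMap s).1 := scm_strictAnti hb
          filter_upwards [hfst.eventually_const_lt h1] with i hi
          by_contra hc
          push_neg at hc
          exact absurd (scm_strictAnti.antitone hc) (not_le.mpr hi)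
      exact ⟨_, (continuous_coe_circle.tendsto _).comp (ht.const_mul ((n:ℝ)))⟩
    · -- limit is the special point
      have hp' : (x : ℝ × ℝ) = ((0:ℝ), (1/2:ℝ)) := hp
      rw [hp'] at hx
      have hsnd : Tendsto (fun i => (sineCurveMap (t i)).2) atTop (nhds (1/2)) :=
        (continuous_snd.tendsto _).comp hx
      have hfr : Tendsto (fun i => Int.fract (t i)) atTop (nhds (1/2)) := by
        rw [tendsto_iff_dist_tendsto_zero]
        have : Tendsto (fun i => |(sineCurveMap (t i)).2 - 1/2|) atTop (nhds 0) := by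
          have := (hsnd.sub_const (1/2)).abs
          simpa using this
        simp only [Real.dist_eq, ← scm_snd]
        exact this
      refine ⟨(((n:ℝ) * (1/2) : ℝ) : UnitAddCircle), ?_⟩
      have heq : ∀ i, (((n:ℝ) * t i : ℝ) : UnitAddCircle)
          = (((n:ℝ) * Int.fract (t i) : ℝ) : UnitAddCircle) := fun i => coe_int_mul n (t i)
      simp only [heq]
      exact (continuous_coe_circle.tendsto _).comp (hfr.const_mul ((n:ℝ)))
end

section
/- Let f : S¹ → S¹ be an orientation-preserving homeomorphism with irrational rotation number θ, and λ the suspension-flow orbit of any point of the suspension S_f. Then the exponent group E_λ contains the subgroup ℤθ + ℤ of ℝ generated by θ and 1. -/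
/-!
By Poincaré, a lift `F` with irrational translation number `θ` is semiconjugate to `x ↦ θ + x`
by a monotone degree-one `H`. The range of `H` is invariant under the dense group `ℤθ + ℤ`, so
`H` is continuous and descends to a continuous `h : S¹ → S¹` with `h ∘ f = h + θ`. On the
suspension, `[s, z] ↦ h z + θ s` is then well defined and continuous, and along the orbit it
equals `θ t` plus a constant; so `θ` is an exponent, and likewise `1` via `[s, z] ↦ s`.
Exponents form a group.
-/

open Filter Topology

def suspRel {Z : Type*} (g : Equiv.Perm Z) (p q : ℝ × Z) : Prop :=
  ∃ n : ℤ, q.1 = p.1 + n ∧ q.2 = (g ^ (-n)) p.2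

/-- The group of exponents of a map into a topological space (here the
suspension, carrying the quotient topology). -/
def expGroupT {X : Type*} [TopologicalSpace X] (f : ℝ → X) : Set ℝ :=
  {α : ℝ | ∀ t : ℕ → ℝ, (∃ x : X, Tendsto (fun i => f (t i)) atTop (nhds x)) →
      ∃ ξ : UnitAddCircle, Tendsto (fun i => ((α * t i : ℝ) : UnitAddCircle)) atTop (nhds ξ)}

open Function Pointwise

theorem UnitAddCircle.coe_eq_coe_iff {a b : ℝ} :
    (a : UnitAddCircle) = b ↔ ∃ k : ℤ, b = a + k := by
  rw [QuotientAddGroup.eq, AddSubgroup.mem_zmultiples_iff]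
  refine exists_congr fun k => ?_
  rw [zsmul_one]
  constructor <;> intro h <;> linarith

namespace CircleDeg1Lift

theorem denseRange_of_semiconj_translate {f H : CircleDeg1Lift} (hf : Surjective f) {θ : ℝ}
    (hθ : Irrational θ) (hH : ∀ x, H (f x) = θ + H x) : DenseRange H := by
  have hθS : θ ∈ AddAction.stabilizer ℝ (Set.range H) := by
    rw [AddAction.mem_stabilizer_iff, Set.vadd_set_range]
    simp only [vadd_eq_add, ← hH]
    exact hf.range_comp H
  have h1S : (1 : ℝ) ∈ AddAction.stabilizer ℝ (Set.range H) := by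
    rw [AddAction.mem_stabilizer_iff, Set.vadd_set_range]
    simp only [vadd_eq_add, add_comm (1 : ℝ), ← map_add_one]
    exact (add_right_surjective 1).range_comp H
  have hclosure : AddSubgroup.closure {θ, 1} ≤ AddAction.stabilizer ℝ (Set.range H) :=
    (AddSubgroup.closure_le _).2 (Set.pair_subset_iff.2 ⟨hθS, h1S⟩)
  have hdense : Dense (AddSubgroup.closure {θ, 1} : Set ℝ) :=
    dense_addSubgroupClosure_pair_iff.2 (by rwa [div_one])
  refine (hdense.vadd (H 0)).mono ?_
  rintro _ ⟨r, hr, rfl⟩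
  rw [← AddAction.mem_stabilizer_iff.1 (hclosure hr)]
  exact ⟨H 0, ⟨0, rfl⟩, add_comm _ _⟩

theorem surjective_of_lift {F : CircleDeg1Lift} {f : UnitAddCircle → UnitAddCircle}
    (hf : Surjective f) (hF : ∀ x : ℝ, f x = F x) : Surjective F := by
  intro y
  obtain ⟨z, hz⟩ := hf y
  obtain ⟨w, rfl⟩ := QuotientAddGroup.mk_surjective z
  obtain ⟨k, rfl⟩ := UnitAddCircle.coe_eq_coe_iff.1 ((hF w).symm.trans hz)
  exact ⟨w + k, map_add_int F w k⟩

theorem exists_continuous_semiconj_translate {f : CircleDeg1Lift} (hf : Bijective f)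
    (hτ : Irrational f.translationNumber) :
    ∃ H : CircleDeg1Lift, Continuous H ∧ ∀ x, H (f x) = f.translationNumber + H x := by
  obtain ⟨H, hH⟩ := semiconj_of_isUnit_of_translationNumber_eq (isUnit_iff_bijective.2 hf)
    (translate (Multiplicative.ofAdd f.translationNumber)).isUnit
    (translationNumber_translate _).symm
  have hH' : ∀ x, H (f x) = f.translationNumber + H x :=
    fun x => (hH x).trans (translate_apply _ _)
  exact ⟨H, H.monotone.continuous_of_denseRange (denseRange_of_semiconj_translate hf.2 hτ hH'),
    hH'⟩

theorem exists_continuous_descend (H : CircleDeg1Lift) (hH : Continuous H) :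
    ∃ G : UnitAddCircle → UnitAddCircle, Continuous G ∧ ∀ y : ℝ, G y = H y := by
  have hwd : ∀ a b : ℝ, QuotientAddGroup.leftRel (AddSubgroup.zmultiples (1 : ℝ)) a b →
      (H a : UnitAddCircle) = H b := by
    intro a b hab
    obtain ⟨k, rfl⟩ := UnitAddCircle.coe_eq_coe_iff.1 (Quotient.sound hab)
    exact UnitAddCircle.coe_eq_coe_iff.2 ⟨k, map_add_int H a k⟩
  exact ⟨fun z => Quotient.liftOn' z (fun y => (H y : UnitAddCircle)) hwd,
    Continuous.quotient_liftOn' (continuous_quotient_mk'.comp hH) hwd, fun _ => rfl⟩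

end CircleDeg1Lift

theorem Equiv.Perm.map_zpow_apply {X G : Type*} [AddCommGroup G] {g : Equiv.Perm X}
    {c : X → G} {a : G} (hc : ∀ z, c (g z) = a + c z) (k : ℤ) (z : X) :
    c ((g ^ k) z) = k • a + c z := by
  induction k using Int.induction_on generalizing z with
  | zero => simp
  | succ k ih => rw [zpow_add_one, Equiv.Perm.mul_apply, ih, hc, add_zsmul, one_zsmul]; abel
  | pred k ih =>
    have hinv : c (g⁻¹ z) = c z - a := by
      rw [eq_sub_iff_add_eq, add_comm, ← hc, Equiv.Perm.inv_def, Equiv.apply_symm_apply]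
    rw [zpow_sub_one, Equiv.Perm.mul_apply, ih, hinv, sub_zsmul, one_zsmul]
    abel

section ExponentGroup

variable {X : Type*} [TopologicalSpace X]

def expAddSubgroup (φ : ℝ → X) : AddSubgroup ℝ where
  carrier := expGroupT φ
  zero_mem' := fun t _ => ⟨0, by simp⟩
  add_mem' := by
    rintro a b ha hb t ht
    obtain ⟨ξ, hξ⟩ := ha t ht
    obtain ⟨η, hη⟩ := hb t ht
    exact ⟨ξ + η, (hξ.add hη).congr fun i => by rw [add_mul, AddCircle.coe_add]⟩
  neg_mem' := by
    rintro a ha t ht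
    obtain ⟨ξ, hξ⟩ := ha t ht
    exact ⟨-ξ, hξ.neg.congr fun i => by rw [neg_mul, AddCircle.coe_neg]⟩

theorem mem_expGroupT_of_continuous {φ : ℝ → X} {α : ℝ} {c : X → UnitAddCircle}
    (hc : Continuous c) (a : UnitAddCircle) (hφ : ∀ t, c (φ t) = (α * t : ℝ) + a) :
    α ∈ expGroupT φ := by
  rintro t ⟨y, hy⟩
  exact ⟨c y - a, (((hc.tendsto y).comp hy).sub_const a).congr fun i => by simp [hφ]⟩

theorem mem_expGroupT_suspension {g : Equiv.Perm X} {c : X → UnitAddCircle} (hc : Continuous c)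
    {θ : ℝ} (hcg : ∀ z, c (g z) = θ + c z) (s : ℝ) (x : X) :
    θ ∈ expGroupT (fun t : ℝ => Quot.mk (suspRel g) (t + s, x)) := by
  let Φ : ℝ × X → UnitAddCircle := fun p => c p.2 + (θ * p.1 : ℝ)
  have hΦ : ∀ p q, suspRel g p q → Φ p = Φ q := by
    rintro p q ⟨n, hq1, hq2⟩
    simp only [Φ, hq1, hq2, Equiv.Perm.map_zpow_apply hcg, mul_add, AddCircle.coe_add,
      mul_comm θ (n : ℝ), ← zsmul_eq_mul, AddCircle.coe_zsmul, neg_zsmul]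
    abel
  refine mem_expGroupT_of_continuous (continuous_quot_lift hΦ (by fun_prop)) (c x + (θ * s : ℝ))
    fun t => ?_
  simp only [Φ, mul_add, AddCircle.coe_add]
  abel

end ExponentGroup

theorem suspension_exponents_contain_general (θ : ℝ) (hθ : Irrational θ)
    (f : Equiv.Perm UnitAddCircle)
    (F : ℝ → ℝ) (hFmono : StrictMono F) (hFdeg : ∀ x : ℝ, F (x + 1) = F x + 1)
    (hlift : ∀ x : ℝ, f ((x : ℝ) : UnitAddCircle) = ((F x : ℝ) : UnitAddCircle))
    (hrot : Tendsto (fun n : ℕ => F^[n] 0 / n) atTop (nhds θ))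
    (s : ℝ) (x : UnitAddCircle) :
    {r : ℝ | ∃ m n : ℤ, r = m * θ + n}
      ⊆ expGroupT (fun t : ℝ => Quot.mk (suspRel f) (t + s, x)) := by
  let F' : CircleDeg1Lift := ⟨⟨F, hFmono.monotone⟩, hFdeg⟩
  have hτ : F'.translationNumber = θ :=
    tendsto_nhds_unique (F'.tendsto_translation_number₀.congr fun n => by
      rw [CircleDeg1Lift.coe_pow]; rfl) hrot
  have hF'bij : Bijective F' :=
    ⟨hFmono.injective, CircleDeg1Lift.surjective_of_lift f.surjective hlift⟩
  obtain ⟨H, hHcont, hH⟩ := F'.exists_continuous_semiconj_translate hF'bij (hτ ▸ hθ)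
  obtain ⟨G, hGcont, hG⟩ := H.exists_continuous_descend hHcont
  have hGf : ∀ z, G (f z) = θ + G z := by
    intro z
    induction z using QuotientAddGroup.induction_on with | H y => ?_
    rw [hlift, hG, hG, ← hτ, ← AddCircle.coe_add, ← hH]
    rfl
  set φ := fun t : ℝ => Quot.mk (suspRel f) (t + s, x)
  have hθE : θ ∈ expAddSubgroup φ := mem_expGroupT_suspension hGcont hGf s x
  -- `(1 : ℝ)` vanishes on the circle, so the zero map is a circle factor with rotation `1`.
  have h1E : (1 : ℝ) ∈ expAddSubgroup φ :=
    mem_expGroupT_suspension (c := 0) continuous_const (fun _ => by simp [AddCircle.coe_period]) s x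
  rintro _ ⟨m, n, rfl⟩
  change _ ∈ expAddSubgroup φ
  simpa using add_mem (zsmul_mem hθE m) (zsmul_mem h1E n)

theorem suspension_exponents_contain (θ : ℝ) (hθ : Irrational θ)
    (f : Equiv.Perm UnitAddCircle) (hfc : Continuous f) (hfc' : Continuous f.symm)
    (F : ℝ → ℝ) (hFmono : StrictMono F) (hFdeg : ∀ x : ℝ, F (x + 1) = F x + 1)
    (hlift : ∀ x : ℝ, f ((x : ℝ) : UnitAddCircle) = ((F x : ℝ) : UnitAddCircle))
    (hrot : Tendsto (fun n : ℕ => F^[n] 0 / n) atTop (nhds θ))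
    (s : ℝ) (x : UnitAddCircle) :
    {r : ℝ | ∃ m n : ℤ, r = m * θ + n}
      ⊆ expGroupT (fun t : ℝ => Quot.mk (suspRel f) (t + s, x)) :=
  suspension_exponents_contain_general θ hθ f F hFmono hFdeg hlift hrot s x
end
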